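/- Let G be a strongly connected digraph, s a start vertex, and e=(u,v) a strong bridge that is a bridge in the flow graph G_s. For every strongly connected component C of G\e satisfying C ⊆ D(v), there exists a vertex w ∈ C that is an ancestor in the loop nesting tree H of all vertices of C. -/

import Mathlib

namespace StrongConn

variable {V : Type*}

/-- `p` is a walk in the digraph `G` from `u` to `v`, recorded as the list of visited vertices. -/
def IsWalk (G : V → V → Prop) (u v : V) (p : List V) : Prop :=
  p.Chain' G ∧ p.head? = some u ∧ p.getLast? = some v

/-- The directed edge `(a,b)` occurs on the walk `p`. -/
def EdgeOn (a b : V) (p : List V) : Prop := (a, b) ∈ p.zip p.tail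

/-- `v` is reachable from `u` in `G`. -/
def Reach (G : V → V → Prop) (u v : V) : Prop := ∃ p, IsWalk G u v p

/-- `u` and `v` are strongly connected in `G`. -/
def SConn (G : V → V → Prop) (u v : V) : Prop := Reach G u v ∧ Reach G v u

def StronglyConnected (G : V → V → Prop) : Prop := ∀ u v, Reach G u v

/-- `G` with the edge `(a,b)` deleted. -/
def DelEdge (G : V → V → Prop) (a b : V) : V → V → Prop :=
  fun x y => G x y ∧ ¬(x = a ∧ y = b)

/-- `G` with the vertex `u` (and all incident edges) deleted. -/
def DelVertex (G : V → V → Prop) (u : V) : V → V → Prop :=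
  fun x y => G x y ∧ x ≠ u ∧ y ≠ u

/-- `C` is a strongly connected component of `G`. -/
def IsSCC (G : V → V → Prop) (C : Set V) : Prop :=
  C.Nonempty ∧ (∀ x ∈ C, ∀ y ∈ C, SConn G x y) ∧ ∀ x ∈ C, ∀ y, SConn G x y → y ∈ C

/-- `(a,b)` is a strong bridge: an edge whose removal increases the number of
strongly connected components, i.e. it separates some strongly connected pair. -/
def IsStrongBridge (G : V → V → Prop) (a b : V) : Prop :=
  G a b ∧ ∃ x y, SConn G x y ∧ ¬ SConn (DelEdge G a b) x y

/-- `u` is a strong articulation point: removing it increases the number of strongly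
connected components, i.e. it separates some strongly connected pair of other vertices. -/
def IsStrongArticulationPoint (G : V → V → Prop) (u : V) : Prop :=
  ∃ x y, x ≠ u ∧ y ≠ u ∧ SConn G x y ∧ ¬ SConn (DelVertex G u) x y

/-- The reverse digraph. -/
def Rev (G : V → V → Prop) : V → V → Prop := fun x y => G y x

/-- `u` dominates `v` in the flow graph `G_s`; equivalently, `u` is an ancestor of `v`
(and `v` a descendant of `u`) in the dominator tree of `G_s`. -/
def Dom (G : V → V → Prop) (s u v : V) : Prop :=
  ∀ p, IsWalk G s v p → u ∈ p

/-- `u` is the immediate dominator of `v` in `G_s` (the parent of `v` in the dominator tree). -/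
def Idom (G : V → V → Prop) (s u v : V) : Prop :=
  u ≠ v ∧ Dom G s u v ∧ ∀ w, w ≠ v → Dom G s w v → Dom G s w u

/-- Edge `(a,b)` is a bridge of the flow graph `G_s`: every walk from `s` to `b` uses it. -/
def IsBridge (G : V → V → Prop) (s a b : V) : Prop :=
  G a b ∧ ∀ p, IsWalk G s b p → EdgeOn a b p

/-- `r` is the head of some bridge of `G_s`, i.e. a non-`s` root in the bridge
decomposition of the dominator tree. -/
def IsBridgeHead (G : V → V → Prop) (s r : V) : Prop :=
  ∃ a, IsBridge G s a r

/-- `r` is the root of the tree containing `x` in the bridge decomposition of the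
dominator tree of `G_s`: `r` dominates `x`, `r` is `s` or a bridge head, and every
bridge head dominating `x` dominates `r`. -/
def IsBDRoot (G : V → V → Prop) (s r x : V) : Prop :=
  Dom G s r x ∧ (r = s ∨ IsBridgeHead G s r) ∧
    ∀ z, Dom G s z x → IsBridgeHead G s z → Dom G s z r

/-- A depth-first search tree of `G` rooted at `s`, given by a parent function and a
preorder numbering. -/
structure DFSTree (G : V → V → Prop) (s : V) where
  parent : V → V
  pre : V → ℕ
  parent_root : parent s = s
  parent_edge : ∀ v, v ≠ s → G (parent v) v
  root_reach : ∀ v, ∃ n, parent^[n] v = s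
  pre_inj : Function.Injective pre
  pre_parent : ∀ v, v ≠ s → pre (parent v) < pre v
  /-- Descendants of a vertex form a contiguous interval in preorder. -/
  interval : ∀ u v w, (∃ n, parent^[n] w = u) → pre u ≤ pre v → pre v ≤ pre w →
      ∃ n, parent^[n] v = u
  /-- The defining property of depth-first search trees: every edge going forward
  in preorder goes to a descendant. -/
  dfs_edge : ∀ u v, G u v → pre u < pre v → ∃ n, parent^[n] v = u

/-- `u` is an ancestor of `v` in the tree `T` (every vertex is an ancestor of itself). -/
def DFSTree.Anc {G : V → V → Prop} {s : V} (T : DFSTree G s) (u v : V) : Prop :=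
  ∃ n, T.parent^[n] v = u

/-- `x ∈ loop(u)` with respect to the tree-ancestor relation `tanc`: `x` is a descendant
of `u` and there is a walk from `x` to `u` using only descendants of `u`. -/
def InLoop (G : V → V → Prop) (tanc : V → V → Prop) (u x : V) : Prop :=
  tanc u x ∧ ∃ p, IsWalk G x u p ∧ ∀ y ∈ p, tanc u y

/-- `hp` is the parent function of the loop nesting tree of `G_s` with respect to the
DFS-tree ancestor relation `tanc`: `hp x` is the nearest proper ancestor `u` of `x`
in the DFS tree with `x ∈ loop(u)`. -/
def IsLoopParent (G : V → V → Prop) (s : V) (tanc : V → V → Prop) (hp : V → V) : Prop :=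
  hp s = s ∧ ∀ x, x ≠ s →
    (tanc (hp x) x ∧ hp x ≠ x ∧ InLoop G tanc (hp x) x ∧
      ∀ u, tanc u x → u ≠ x → InLoop G tanc u x → tanc u (hp x))

/-- `u` is an ancestor of `v` in the loop nesting tree with parent function `hp`. -/
def HAnc (hp : V → V) (u v : V) : Prop := ∃ n, hp^[n] v = u

/-- `w` is the nearest common ancestor of `x` and `y` in the loop nesting tree
with parent function `hp`. -/
def HNca (hp : V → V) (x y w : V) : Prop :=
  HAnc hp w x ∧ HAnc hp w y ∧ ∀ z, HAnc hp z x → HAnc hp z y → HAnc hp z w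

/-- `u` is a nontrivial dominator of `G_s`: `u ≠ s` and `u` is not a leaf of the
dominator tree (it properly dominates some vertex). -/
def NontrivialDom (G : V → V → Prop) (s u : V) : Prop :=
  u ≠ s ∧ ∃ w, w ≠ u ∧ Dom G s u w

/-- `a` and `b` are siblings in the dominator tree of `G_s`. -/
def SiblingInD (G : V → V → Prop) (s a b : V) : Prop :=
  a ≠ b ∧ ∃ w, Idom G s w a ∧ Idom G s w b

/-- Given the bridge-decomposition root function `r` and loop-nesting parent `hp`,
`z` is a boundary vertex. -/
def Boundary (s : V) (r hp : V → V) (z : V) : Prop := z = s ∨ r (hp z) ≠ r z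

/-- `z` is the nearest boundary ancestor of `x` in the loop nesting tree. -/
def IsNearestBoundary (s : V) (r hp : V → V) (x z : V) : Prop :=
  HAnc hp z x ∧ Boundary s r hp z ∧
    ∀ z', HAnc hp z' x → Boundary s r hp z' → HAnc hp z' z

/-- `x` and `y` are 2-edge-connected: no single edge deletion leaves them in
different strongly connected components. -/
def TwoEdgeConnected (G : V → V → Prop) (x y : V) : Prop :=
  ∀ a b, G a b → SConn (DelEdge G a b) x y


/-!
Let `w` be the vertex of `C` that comes first in preorder. Any walk inside `C` that starts at
`w` stays among the DFS descendants of `w`, because an edge can leave the subtree of `w` only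
towards a vertex of smaller preorder. Hence every `x ∈ C` lies in `loop(w)`: it is a descendant
of `w` and reaches `w` inside `C`. Finally, membership in `loop(w)` propagates up the loop
nesting tree: if `x ∈ loop(w)` and `x ≠ w`, then also `hp x ∈ loop(w)`, and `hp x` is earlier
in preorder.
-/

section Walks

variable {G : V → V → Prop} {a b c : V} {p q : List V}

lemma IsWalk.mono {G' : V → V → Prop} (h : ∀ x y, G x y → G' x y) (hw : IsWalk G a b p) :
    IsWalk G' a b p :=
  ⟨hw.1.imp h, hw.2.1, hw.2.2⟩

lemma isWalk_singleton (G : V → V → Prop) (a : V) : IsWalk G a a [a] :=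
  ⟨List.isChain_singleton a, rfl, rfl⟩

lemma IsWalk.append (h₁ : IsWalk G a b p) (h₂ : IsWalk G b c q) :
    IsWalk G a c (p ++ q.tail) := by
  obtain ⟨hc₁, hh₁, hl₁⟩ := h₁
  obtain ⟨hc₂, hh₂, hl₂⟩ := h₂
  obtain ⟨t, rfl⟩ : ∃ t, q = b :: t := by
    cases q with
    | nil => simp at hh₂
    | cons b' t => exact ⟨t, by simpa using hh₂⟩
  have hp : p ≠ [] := by rintro rfl; simp at hh₁
  refine ⟨hc₁.append hc₂.tail ?_, ?_, ?_⟩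
  · rw [hl₁]
    simpa using List.isChain_cons.mp hc₂ |>.1
  · rwa [List.head?_append_of_ne_nil _ hp]
  · cases t with
    | nil => simpa [hl₁] using hl₂
    | cons d t => simpa [List.getLast?_append] using hl₂

lemma Reach.trans (h₁ : Reach G a b) (h₂ : Reach G b c) : Reach G a c :=
  let ⟨_, hp⟩ := h₁
  let ⟨_, hq⟩ := h₂
  ⟨_, hp.append hq⟩

lemma IsWalk.reach_of_mem (hw : IsWalk G a b p) {y : V} (hy : y ∈ p) :
    Reach G a y ∧ Reach G y b := by
  obtain ⟨l₁, l₂, rfl⟩ := List.append_of_mem hy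
  obtain ⟨hc, hh, hl⟩ := hw
  refine ⟨⟨l₁ ++ [y], hc.prefix ⟨l₂, by simp⟩, ?_, by simp⟩,
    ⟨y :: l₂, hc.suffix ⟨l₁, rfl⟩, rfl, ?_⟩⟩
  · cases l₁ <;> simpa using hh
  · simpa using hl

lemma IsWalk.getLast_mem (hw : IsWalk G a b p) : b ∈ p :=
  List.mem_of_mem_getLast? hw.2.2

end Walks

lemma IsSCC.exists_walk_subset {G : V → V → Prop} {C : Set V} (hC : IsSCC G C) {x y : V}
    (hx : x ∈ C) (hy : y ∈ C) : ∃ p, IsWalk G x y p ∧ ∀ z ∈ p, z ∈ C := by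
  obtain ⟨p, hw⟩ := (hC.2.1 x hx y hy).1
  refine ⟨p, hw, fun z hz => hC.2.2 x hx z ⟨?_, ?_⟩⟩
  · exact (hw.reach_of_mem hz).1
  · exact (hw.reach_of_mem hz).2.trans (hC.2.1 y hy x hx).1

namespace DFSTree

variable {G : V → V → Prop} {s : V} (T : DFSTree G s)

lemma anc_refl (x : V) : T.Anc x x := ⟨0, rfl⟩

variable {T}

lemma Anc.trans {a b c : V} (h₁ : T.Anc a b) (h₂ : T.Anc b c) : T.Anc a c := by
  obtain ⟨n, rfl⟩ := h₁
  obtain ⟨m, rfl⟩ := h₂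
  exact ⟨n + m, Function.iterate_add_apply _ n m c⟩

lemma eq_root_of_anc_root {a : V} (h : T.Anc a s) : a = s := by
  obtain ⟨n, rfl⟩ := h
  exact Function.iterate_fixed T.parent_root n

lemma pre_parent_le (x : V) : T.pre (T.parent x) ≤ T.pre x := by
  by_cases hx : x = s
  · rw [hx, T.parent_root]
  · exact (T.pre_parent x hx).le

lemma Anc.pre_le {a b : V} (h : T.Anc a b) : T.pre a ≤ T.pre b := by
  obtain ⟨n, rfl⟩ := h
  induction n with
  | zero => rfl
  | succ n ih => exact (Function.iterate_succ_apply' T.parent n b ▸ pre_parent_le _).trans ih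

lemma Anc.pre_lt {a b : V} (h : T.Anc a b) (hne : a ≠ b) : T.pre a < T.pre b :=
  h.pre_le.lt_of_ne fun he => hne (T.pre_inj he)

lemma Anc.exists_walk {a x : V} (h : T.Anc a x) :
    ∃ p, IsWalk G a x p ∧ ∀ y ∈ p, T.Anc a y := by
  obtain ⟨n, rfl⟩ := h
  induction n generalizing x with
  | zero =>
    exact ⟨[x], isWalk_singleton G x, fun y hy => List.mem_singleton.mp hy ▸ T.anc_refl x⟩
  | succ n ih =>
    by_cases hx : x = s
    · rw [hx, Function.iterate_fixed T.parent_root]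
      exact ⟨[s], isWalk_singleton G s, fun y hy => List.mem_singleton.mp hy ▸ T.anc_refl s⟩
    obtain ⟨p, hw, hanc⟩ := ih (x := T.parent x)
    have hedge : IsWalk G (T.parent x) x [T.parent x, x] :=
      ⟨List.isChain_pair.mpr (T.parent_edge x hx), rfl, rfl⟩
    refine ⟨p ++ [x], hw.append hedge, fun y hy => ?_⟩
    rcases List.mem_append.mp hy with hy | hy
    · exact hanc y hy
    · obtain rfl := List.mem_singleton.mp hy
      exact ⟨n + 1, rfl⟩

lemma anc_of_isWalk {w a b : V} {p : List V} (hw : IsWalk G a b p) (ha : T.Anc w a)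
    (hpre : ∀ y ∈ p, T.pre w ≤ T.pre y) : ∀ y ∈ p, T.Anc w y := by
  refine (List.IsChain.iff_mem.mp hw.1).induction _ _ ?_ fun hne => ?_
  · rintro x y ⟨-, hy, hxy⟩ hx
    rcases lt_or_ge (T.pre x) (T.pre y) with hlt | hle
    · exact hx.trans (T.dfs_edge x y hxy hlt)
    · exact T.interval w y x hx (hpre y hy) hle
  · rwa [Option.some_inj.mp ((List.head?_eq_some_head hne).symm.trans hw.2.1)]

end DFSTree

section LoopNesting

variable {G : V → V → Prop} {s : V} {T : DFSTree G s} {hp : V → V}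

lemma HAnc.of_parent {a x : V} (h : HAnc hp a (hp x)) : HAnc hp a x :=
  let ⟨n, hn⟩ := h
  ⟨n + 1, hn⟩

lemma InLoop.parent (hlp : IsLoopParent G s T.Anc hp) {a x : V} (h : InLoop G T.Anc a x)
    (hxs : x ≠ s) (hxa : x ≠ a) : InLoop G T.Anc a (hp x) := by
  obtain ⟨hpx, -, -, hmax⟩ := hlp.2 x hxs
  have ha : T.Anc a (hp x) := hmax a h.1 (Ne.symm hxa) h
  obtain ⟨p, hwp, hp_anc⟩ := h.2
  obtain ⟨q, hwq, hq_anc⟩ := hpx.exists_walk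
  refine ⟨ha, q ++ p.tail, hwq.append hwp, fun y hy => ?_⟩
  rcases List.mem_append.mp hy with hy | hy
  · exact ha.trans (hq_anc y hy)
  · exact hp_anc y (List.mem_of_mem_tail hy)

lemma InLoop.hAnc (hlp : IsLoopParent G s T.Anc hp) {a x : V} (h : InLoop G T.Anc a x) :
    HAnc hp a x := by
  by_cases hxa : x = a
  · exact ⟨0, hxa⟩
  have hxs : x ≠ s := by
    rintro rfl
    exact hxa (DFSTree.eq_root_of_anc_root h.1).symm
  have hlt : T.pre (hp x) < T.pre x := (hlp.2 x hxs).1.pre_lt (hlp.2 x hxs).2.1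
  exact (InLoop.hAnc hlp (h.parent hlp hxs hxa)).of_parent
termination_by T.pre x

theorem exists_hAnc_of_isWalk_subset (hlp : IsLoopParent G s T.Anc hp) {C : Set V}
    (hne : C.Nonempty)
    (hC : ∀ x ∈ C, ∀ y ∈ C, ∃ p, IsWalk G x y p ∧ ∀ z ∈ p, z ∈ C) :
    ∃ w ∈ C, ∀ x ∈ C, HAnc hp w x := by
  set w := Function.argminOn T.pre C hne
  have hwC : w ∈ C := Function.argminOn_mem T.pre C hne
  have hanc : ∀ z ∈ C, T.Anc w z := fun z hz => by
    obtain ⟨p, hw, hpC⟩ := hC w hwC z hz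
    exact T.anc_of_isWalk hw (T.anc_refl w)
      (fun y hy => Function.argminOn_le T.pre C (hpC y hy)) z hw.getLast_mem
  refine ⟨w, hwC, fun x hx => InLoop.hAnc hlp ⟨hanc x hx, ?_⟩⟩
  obtain ⟨p, hw, hpC⟩ := hC x hx w hwC
  exact ⟨p, hw, fun y hy => hanc y (hpC y hy)⟩

end LoopNesting

theorem stmt4_general (G : V → V → Prop) (s u v : V)
    (T : DFSTree G s) (hp : V → V) (hlp : IsLoopParent G s T.Anc hp)
    (C : Set V) (hC : IsSCC (DelEdge G u v) C) :
    ∃ w ∈ C, ∀ x ∈ C, HAnc hp w x :=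
  exists_hAnc_of_isWalk_subset hlp hC.1 fun _ hx _ hy =>
    let ⟨p, hw, hpC⟩ := hC.exists_walk_subset hx hy
    ⟨p, hw.mono fun _ _ h => h.1, hpC⟩

/-- Every strongly connected component `C ⊆ D(v)` of `G \ (u,v)` contains a vertex `w`
that is an ancestor in the loop nesting tree `H` of all vertices of `C`. -/
theorem stmt4 (G : V → V → Prop) (hG : StronglyConnected G) (s u v : V)
    (hsb : IsStrongBridge G u v) (hbr : IsBridge G s u v)
    (T : DFSTree G s) (hp : V → V) (hlp : IsLoopParent G s T.Anc hp)
    (C : Set V) (hC : IsSCC (DelEdge G u v) C) (hsub : C ⊆ {x | Dom G s v x}) :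
    ∃ w ∈ C, ∀ x ∈ C, HAnc hp w x :=
  stmt4_general G s u v T hp hlp C hC

end StrongConn
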